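/- Let n ≥ 3, ψ a permutation-symmetric state of n qudits, and X, Y matrices with X_{(1)}ψ ∈ S and Y_{(1)}ψ ∈ S (S the symmetric subspace). Then [X,Y]_{(1)}ψ = 0. -/
import Mathlib


open Matrix BigOperators Polynomial

/-- Permutation symmetry of an `n`-qudit state represented by its amplitudes. -/
def PSym {n d : ℕ} (ψ : (Fin n → Fin d) → ℂ) : Prop :=
  ∀ σ : Equiv.Perm (Fin n), ∀ x : Fin n → Fin d, ψ (x ∘ σ) = ψ x

/-- The operator `B` acting on the `k`-th tensor factor (identity elsewhere). -/
noncomputable def appAt {n d : ℕ} (k : Fin n) (B : Matrix (Fin d) (Fin d) ℂ)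
    (ψ : (Fin n → Fin d) → ℂ) : (Fin n → Fin d) → ℂ :=
  fun x => ∑ j : Fin d, B (x k) j * ψ (Function.update x k j)

/-- The operator `A 1 ⊗ A 2 ⊗ ⋯ ⊗ A n` acting on an `n`-qudit state. -/
noncomputable def appAll {n d : ℕ} (A : Fin n → Matrix (Fin d) (Fin d) ℂ)
    (ψ : (Fin n → Fin d) → ℂ) : (Fin n → Fin d) → ℂ :=
  fun x => ∑ y : Fin n → Fin d, (∏ k, A k (x k) (y k)) * ψ y

lemma appAt_eq_of_psym {n d : ℕ} (k0 k : Fin n) (B : Matrix (Fin d) (Fin d) ℂ)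
    (ψ : (Fin n → Fin d) → ℂ) (hψ : PSym ψ) (hφ : PSym (appAt k0 B ψ)) :
    appAt k B ψ = appAt k0 B ψ := by
  funext x
  set σ : Equiv.Perm (Fin n) := Equiv.swap k0 k with hσ
  have key : ∀ j : Fin d, Function.update (x ∘ σ) k0 j ∘ σ = Function.update x k j := by
    intro j
    funext i
    by_cases h : i = k
    · have hσk : σ k = k0 := by rw [hσ]; exact Equiv.swap_apply_right k0 k
      subst h
      simp only [Function.comp_apply]
      rw [hσk]
      simp
    · have hne : σ i ≠ k0 := by
        intro hc
        apply h
        have := congrArg σ hc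
        rwa [Equiv.swap_apply_self, Equiv.swap_apply_left] at this
      simp only [Function.comp_apply, Function.update_of_ne hne, Function.update_of_ne h]
      rw [Equiv.swap_apply_self]
  have hx0 : (x ∘ σ) k0 = x k := by
    simp only [Function.comp_apply, hσ, Equiv.swap_apply_left]
  have step : appAt k B ψ x = appAt k0 B ψ (x ∘ σ) := by
    unfold appAt
    refine Finset.sum_congr rfl fun j _ => ?_
    rw [hx0, ← hψ σ (Function.update (x ∘ σ) k0 j), key j]
  rw [step, hφ σ x]

lemma appAt_comm {n d : ℕ} (j k : Fin n) (hjk : j ≠ k)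
    (A B : Matrix (Fin d) (Fin d) ℂ) (ψ : (Fin n → Fin d) → ℂ) :
    appAt j A (appAt k B ψ) = appAt k B (appAt j A ψ) := by
  funext x
  unfold appAt
  simp only [Function.update_of_ne hjk, Function.update_of_ne hjk.symm, Finset.mul_sum]
  rw [Finset.sum_comm]
  refine Finset.sum_congr rfl fun b _ => Finset.sum_congr rfl fun a _ => ?_
  rw [Function.update_comm hjk]
  ring

lemma appAt_mul {n d : ℕ} (k : Fin n) (A B : Matrix (Fin d) (Fin d) ℂ)
    (ψ : (Fin n → Fin d) → ℂ) :
    appAt k (A * B) ψ = appAt k A (appAt k B ψ) := by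
  funext x
  unfold appAt
  simp only [Function.update_self, Function.update_idem, Matrix.mul_apply,
    Finset.mul_sum, Finset.sum_mul]
  rw [Finset.sum_comm]
  refine Finset.sum_congr rfl fun a _ => Finset.sum_congr rfl fun b _ => ?_
  ring

lemma appAt_sub {n d : ℕ} (k : Fin n) (A B : Matrix (Fin d) (Fin d) ℂ)
    (ψ : (Fin n → Fin d) → ℂ) :
    appAt k (A - B) ψ = appAt k A ψ - appAt k B ψ := by
  funext x
  simp [appAt, Matrix.sub_apply, sub_mul, Finset.sum_sub_distrib]

theorem stmt_2 {n d : ℕ} (hn : 3 ≤ n) (ψ : (Fin n → Fin d) → ℂ) (hψ : PSym ψ)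
    (X Y : Matrix (Fin d) (Fin d) ℂ)
    (hX : PSym (appAt ⟨0, by omega⟩ X ψ))
    (hY : PSym (appAt ⟨0, by omega⟩ Y ψ)) :
    appAt ⟨0, by omega⟩ (X * Y - Y * X) ψ = 0 := by
  have h0 : 0 < n := by omega
  have h1 : 1 < n := by omega
  have h2 : 2 < n := by omega
  set i0 : Fin n := ⟨0, h0⟩ with hi0
  set i1 : Fin n := ⟨1, h1⟩ with hi1
  set i2 : Fin n := ⟨2, h2⟩ with hi2
  have e01 : i0 ≠ i1 := Fin.ne_of_val_ne (by simp [hi0, hi1])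
  have e12 : i1 ≠ i2 := Fin.ne_of_val_ne (by simp [hi1, hi2])
  have e20 : i2 ≠ i0 := Fin.ne_of_val_ne (by simp [hi2, hi0])
  have hX' : PSym (appAt i0 X ψ) := hX
  have hY' : PSym (appAt i0 Y ψ) := hY
  have hX2 : appAt i2 X ψ = appAt i0 X ψ := appAt_eq_of_psym i0 i2 X ψ hψ hX'
  have hY1 : appAt i1 Y ψ = appAt i0 Y ψ := appAt_eq_of_psym i0 i1 Y ψ hψ hY'
  show appAt i0 (X * Y - Y * X) ψ = 0
  rw [appAt_sub, appAt_mul, appAt_mul]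
  have main : appAt i0 X (appAt i0 Y ψ) = appAt i0 Y (appAt i0 X ψ) := by
    calc appAt i0 X (appAt i0 Y ψ) = appAt i0 X (appAt i1 Y ψ) := by rw [hY1]
      _ = appAt i1 Y (appAt i0 X ψ) := appAt_comm i0 i1 e01 X Y ψ
      _ = appAt i1 Y (appAt i2 X ψ) := by rw [hX2]
      _ = appAt i2 X (appAt i1 Y ψ) := appAt_comm i1 i2 e12 Y X ψ
      _ = appAt i2 X (appAt i0 Y ψ) := by rw [hY1]
      _ = appAt i0 Y (appAt i2 X ψ) := appAt_comm i2 i0 e20 X Y ψ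
      _ = appAt i0 Y (appAt i0 X ψ) := by rw [hX2]
  rw [main, sub_self]
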